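/- arXiv:1102.0263 — 4 statements merged into one kernel-verified Lean document; each statement's English description precedes it below -/
import Mathlib

section
/- Let U be a nonempty irreducible topological space, let V be a Noetherian topological space whose Krull dimension equals a natural number d, and let Z be a closed subset of U × V (with the product topology). For u ∈ U write Z_u := {v ∈ V : (u, v) ∈ Z}. Then either there exists v ∈ V such that U × {v} ⊆ Z, or there exist points u₁, …, u_{d+1} ∈ U such that ⋂_{i=1}^{d+1} Z_{u_i} = ∅. -/
open TopologicalSpace in
/-- Let `U` be a nonempty irreducible topological space, `V` a Noetherian
topological space of Krull dimension `d : ℕ`, and `Z ⊆ U × V` closed. Then either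
there is `v ∈ V` with `U × {v} ⊆ Z`, or there are `d + 1` points `u i ∈ U` whose
fibers `Z_{u i}` have empty intersection. -/
theorem stmt_0 (U V : Type*) [TopologicalSpace U] [TopologicalSpace V]
    [IrreducibleSpace U] [TopologicalSpace.NoetherianSpace V]
    (d : ℕ) (hd : topologicalKrullDim V = d)
    (Z : Set (U × V)) (hZ : IsClosed Z) :
    (∃ v : V, ∀ u : U, (u, v) ∈ Z) ∨
      (∃ u : Fin (d + 1) → U, (⋂ i, {v : V | (u i, v) ∈ Z}) = ∅) := by
  classical
  by_cases h1 : ∃ v : V, ∀ u : U, (u, v) ∈ Z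
  · exact Or.inl h1
  right
  push_neg at h1
  -- fibers are closed
  set fib : U → Set V := fun u => {v : V | (u, v) ∈ Z} with hfib
  have fib_closed : ∀ u, IsClosed (fib u) := fun u =>
    hZ.preimage (Continuous.prodMk_right u)
  -- main induction
  have key : ∀ k : ℕ, ∃ u : Fin k → U, ∀ T : IrreducibleCloseds V,
      (T : Set V).Nonempty → (T : Set V) ⊆ (⋂ i, fib (u i)) →
      ∃ p : LTSeries (IrreducibleCloseds V), p.length = k ∧ T ≤ p.head := by
    intro k
    induction k with
    | zero =>
      refine ⟨Fin.elim0, fun T hT _ => ⟨RelSeries.singleton _ T, rfl, le_refl _⟩⟩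
    | succ k ih =>
      obtain ⟨u, hu⟩ := ih
      have hWclosed : IsClosed (⋂ i, fib (u i)) := isClosed_iInter fun i => fib_closed _
      obtain ⟨S, hSfin, hScl, hSirr, hSU⟩ :=
        TopologicalSpace.NoetherianSpace.exists_finite_set_isClosed_irreducible hWclosed
      -- for each component C, the set of u' with C ⊆ fib u' is a proper closed subset of U
      set A : Set V → Set U := fun C => ⋂ v ∈ C, {u' : U | (u', v) ∈ Z} with hA
      have hAclosed : ∀ C, IsClosed (A C) :=
        fun C => isClosed_biInter fun v _ => hZ.preimage (continuous_id.prodMk continuous_const)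
      have hAne : ∀ C ∈ S, A C ≠ Set.univ := by
        intro C hC hAeq
        obtain ⟨v, hv⟩ := (hSirr C hC).nonempty
        obtain ⟨u₀, hu₀⟩ := h1 v
        have : u₀ ∈ A C := hAeq ▸ Set.mem_univ u₀
        exact hu₀ (by simpa using Set.mem_iInter₂.mp this v hv)
      -- pick u' outside all A C, using irreducibility of U
      have : ∃ u' : U, ∀ C ∈ S, u' ∉ A C := by
        by_contra hcon
        push_neg at hcon
        have hcover : (Set.univ : Set U) ⊆ ⋃₀ ↑(Finset.image A hSfin.toFinset) := by
          intro x _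
          obtain ⟨C, hC, hxC⟩ := hcon x
          refine ⟨A C, ?_, hxC⟩
          simp only [Finset.coe_image, Set.mem_image, Set.Finite.coe_toFinset]
          exact ⟨C, hC, rfl⟩
        obtain ⟨z, hz, hUz⟩ := (isIrreducible_iff_sUnion_isClosed.mp
          (IrreducibleSpace.isIrreducible_univ U)) (Finset.image A hSfin.toFinset)
          (by
            intro z hz
            simp only [Finset.mem_image, Set.Finite.mem_toFinset] at hz
            obtain ⟨C, _, rfl⟩ := hz
            exact hAclosed C) hcover
        simp only [Finset.mem_image, Set.Finite.mem_toFinset] at hz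
        obtain ⟨C, hCS, rfl⟩ := hz
        exact hAne C hCS (Set.eq_univ_of_univ_subset hUz)
      obtain ⟨u', hu'⟩ := this
      refine ⟨Fin.snoc u u', fun T hTne hTsub => ?_⟩
      have hTW : (T : Set V) ⊆ ⋂ i, fib (u i) := by
        refine Set.subset_iInter fun i => (hTsub.trans (Set.iInter_subset _ i.castSucc)).trans ?_
        simp [Fin.snoc_castSucc]
      have hTfib : (T : Set V) ⊆ fib u' := by
        have := hTsub.trans (Set.iInter_subset _ (Fin.last k))
        simpa [Fin.snoc_last] using this
      -- T is contained in some irreducible component C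
      have hTS : (T : Set V) ⊆ ⋃₀ S := hSU ▸ hTW
      obtain ⟨C, hCS, hTC⟩ := (isIrreducible_iff_sUnion_isClosed.mp T.isIrreducible)
        hSfin.toFinset (fun z hz => hScl z (hSfin.mem_toFinset.mp hz))
        (by rwa [Set.Finite.coe_toFinset])
      rw [Set.Finite.mem_toFinset] at hCS
      set Cic : IrreducibleCloseds V := ⟨C, hSirr C hCS, hScl C hCS⟩ with hCic
      have hTltC : T < Cic := by
        refine lt_of_le_of_ne hTC ?_
        intro heq
        apply hu' C hCS
        have hCfib : C ⊆ fib u' := by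
          rw [show C = (T : Set V) from
            congrArg (fun s : IrreducibleCloseds V => (s : Set V)) heq.symm]
          exact hTfib
        exact Set.mem_iInter₂.mpr fun v hv => hCfib hv
      obtain ⟨p, hplen, hphead⟩ := hu Cic (hSirr C hCS).nonempty
        (by rw [hSU]; exact Set.subset_sUnion_of_mem hCS)
      refine ⟨p.cons T (lt_of_lt_of_le hTltC hphead), by simp [hplen], ?_⟩
      simp
  obtain ⟨u, hu⟩ := key (d + 1)
  refine ⟨u, ?_⟩
  by_contra hne
  obtain ⟨v, hv⟩ := Set.nonempty_iff_ne_empty.mpr hne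
  have hvW : v ∈ ⋂ i, fib (u i) := hv
  set T : IrreducibleCloseds V := ⟨closure {v}, isIrreducible_singleton.closure, isClosed_closure⟩
  obtain ⟨p, hplen, _⟩ := hu T ⟨v, subset_closure rfl⟩
    (closure_minimal (Set.singleton_subset_iff.mpr hvW)
      (isClosed_iInter fun i => fib_closed _))
  have hle := Order.LTSeries.length_le_krullDim p
  rw [hplen] at hle
  have hdim : Order.krullDim (IrreducibleCloseds V) = d := hd
  rw [hdim] at hle
  exact absurd hle (by exact_mod_cast by omega)
end

section
/- Let U be a nonempty irreducible topological space, let V be a Noetherian topological space whose Krull dimension equals a natural number d, and let Z be a closed subset of U × V (with the product topology). For u ∈ U write Z_u := {v ∈ V : (u, v) ∈ Z}. Assume that for no v ∈ V does Z contain U × {v}. Then for every natural number r with r ≤ d + 1, there exist points u₁, …, u_r ∈ U such that the Krull dimension of ⋂_{i=1}^{r} Z_{u_i} is at most d − r (where the empty set has dimension ⊥, i.e. less than every natural number). -/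
open Order TopologicalSpace

section aux

lemma aux_add_one_le {a b : WithBot ℕ∞}
    (h : ∀ n : ℕ, (n : WithBot ℕ∞) ≤ a → ((n + 1 : ℕ) : WithBot ℕ∞) ≤ b) :
    a + 1 ≤ b := by
  induction a using WithBot.recBotCoe with
  | bot => simp
  | coe x =>
    induction x using ENat.recTopCoe with
    | top =>
      have hb : ∀ n : ℕ, ((n : ℕ) : WithBot ℕ∞) ≤ b := by
        intro n
        calc ((n : ℕ) : WithBot ℕ∞) ≤ ((n + 1 : ℕ) : WithBot ℕ∞) := by
              exact_mod_cast Nat.cast_le.mpr (Nat.le_succ n)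
          _ ≤ b := h n le_top
      induction b using WithBot.recBotCoe with
      | bot => exact absurd (hb 0) (by simp)
      | coe y =>
        induction y using ENat.recTopCoe with
        | top => exact le_top
        | coe m =>
          exact absurd (hb (m + 1)) (by exact_mod_cast by simp [Nat.lt_irrefl])
    | coe m =>
      have := h m (by exact_mod_cast le_refl _)
      calc ((m : ℕ∞) : WithBot ℕ∞) + 1 = ((m + 1 : ℕ) : WithBot ℕ∞) := by push_cast; ring
        _ ≤ b := this

lemma aux_key {A B : Type*} [Preorder A] [Preorder B]
    (H : ∀ p : LTSeries A, ∃ q : LTSeries B, p.length + 1 ≤ q.length) :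
    ∀ n : ℕ, (n : WithBot ℕ∞) ≤ krullDim A →
      ((n + 1 : ℕ) : WithBot ℕ∞) ≤ krullDim B := by
  intro n hn
  have hA : Nonempty A := by
    by_contra hA
    rw [not_nonempty_iff] at hA
    rw [krullDim_eq_bot] at hn
    exact absurd hn (by simp)
  have hp : ∃ p : LTSeries A, n ≤ p.length := by
    by_contra hcon
    push_neg at hcon
    have hn1 : 1 ≤ n := by
      have := hcon (RelSeries.singleton _ (Classical.arbitrary A))
      simp at this; omega
    have hle : krullDim A ≤ ((n - 1 : ℕ) : WithBot ℕ∞) := by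
      apply iSup_le
      intro p
      have h1 := hcon p
      have h2 : p.length ≤ n - 1 := by omega
      exact_mod_cast h2
    have h2 : ((n : ℕ) : WithBot ℕ∞) ≤ ((n - 1 : ℕ) : WithBot ℕ∞) := le_trans hn hle
    have h3 : n ≤ n - 1 := by exact_mod_cast h2
    omega
  obtain ⟨p, hpl⟩ := hp
  obtain ⟨q, hq⟩ := H p
  have h3 : n + 1 ≤ q.length := by omega
  calc ((n + 1 : ℕ) : WithBot ℕ∞) ≤ (q.length : WithBot ℕ∞) := by exact_mod_cast h3
    _ ≤ krullDim B := LTSeries.length_le_krullDim q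

variable {V : Type*} [TopologicalSpace V]

lemma aux_isIrreducible_preimage_val {W S : Set V} (h1 : IsIrreducible S) (h3 : S ⊆ W) :
    IsIrreducible ((Subtype.val : W → V) ⁻¹' S) := by
  constructor
  · obtain ⟨x, hx⟩ := h1.nonempty
    exact ⟨⟨x, h3 hx⟩, hx⟩
  · rintro u v hu hv ⟨a, haS, hau⟩ ⟨b, hbS, hbv⟩
    obtain ⟨u', hu', rfl⟩ := isOpen_induced_iff.mp hu
    obtain ⟨v', hv', rfl⟩ := isOpen_induced_iff.mp hv
    obtain ⟨z, hzS, hzu, hzv⟩ := h1.2 u' v' hu' hv' ⟨a, haS, hau⟩ ⟨b, hbS, hbv⟩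
    exact ⟨⟨z, h3 hzS⟩, hzS, hzu, hzv⟩

/-- An irreducible closed `S ⊆ W` as an irreducible closed of the subspace `W`. -/
noncomputable def auxToSub (W : Set V) (S : Set V) (h1 : IsIrreducible S) (h2 : IsClosed S)
    (h3 : S ⊆ W) : IrreducibleCloseds W where
  carrier := (Subtype.val : W → V) ⁻¹' S
  isIrreducible' := aux_isIrreducible_preimage_val h1 h3
  isClosed' := h2.preimage continuous_subtype_val

lemma auxToSub_lt {W S T : Set V} {h1 h2 h3 h1' h2' h3'} (h : S ⊂ T) :
    auxToSub W S h1 h2 h3 < auxToSub W T h1' h2' h3' := by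
  rw [lt_iff_le_and_ne]
  refine ⟨fun x hx => h.1 hx, ?_⟩
  intro hcon
  apply h.2
  intro x hxT
  have hmem : (⟨x, h3' hxT⟩ : W) ∈ (auxToSub W T h1' h2' h3').carrier := hxT
  rw [← congrArg IrreducibleCloseds.carrier hcon] at hmem
  exact hmem

lemma aux_step {W F : Set V} (hW : IsClosed W) (hF : IsClosed F)
    (H : ∀ C : Set V, IsIrreducible C → IsClosed C → C ⊆ W → C ⊆ F →
      ∃ D : Set V, IsIrreducible D ∧ IsClosed D ∧ D ⊆ W ∧ C ⊂ D) :
    ∀ p : LTSeries (IrreducibleCloseds ↥(W ∩ F)),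
      ∃ q : LTSeries (IrreducibleCloseds ↥W), p.length + 1 ≤ q.length := by
  intro p
  have hWF : IsClosed (W ∩ F) := hW.inter hF
  have himg : ∀ s : IrreducibleCloseds ↥(W ∩ F),
      IsIrreducible ((Subtype.val : (W ∩ F : Set V) → V) '' s.carrier) ∧
      IsClosed ((Subtype.val : (W ∩ F : Set V) → V) '' s.carrier) ∧
      (Subtype.val : (W ∩ F : Set V) → V) '' s.carrier ⊆ W ∧
      (Subtype.val : (W ∩ F : Set V) → V) '' s.carrier ⊆ F := by
    intro s
    refine ⟨s.isIrreducible'.image _ continuous_subtype_val.continuousOn,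
      hWF.isClosedEmbedding_subtypeVal.isClosedMap _ s.isClosed', ?_, ?_⟩
    · rintro x ⟨⟨y, hy⟩, -, rfl⟩; exact hy.1
    · rintro x ⟨⟨y, hy⟩, -, rfl⟩; exact hy.2
  let f : IrreducibleCloseds ↥(W ∩ F) → IrreducibleCloseds ↥W := fun s =>
    auxToSub W _ (himg s).1 (himg s).2.1 (himg s).2.2.1
  have hf : StrictMono f := by
    intro s t hst
    apply auxToSub_lt
    exact Subtype.val_injective.image_strictMono (by exact_mod_cast hst)
  obtain ⟨D, hD1, hD2, hD3, hD4⟩ := H _ (himg p.last).1 (himg p.last).2.1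
    (himg p.last).2.2.1 (himg p.last).2.2.2
  refine ⟨(p.map f hf).snoc (auxToSub W D hD1 hD2 hD3) ?_, ?_⟩
  · rw [LTSeries.last_map]
    exact auxToSub_lt hD4
  · show p.length < p.length + 0 + 1; omega

end aux

/-- Let `U` be a nonempty irreducible topological space, `V` a Noetherian
topological space of Krull dimension `d : ℕ`, and `Z ⊆ U × V` closed. Suppose no
fiber `U × {v}` is contained in `Z`. Then for every `r ≤ d + 1` there are points
`u 1, …, u r ∈ U` such that the Krull dimension of `⋂ i, Z_{u i}` is at most `d - r`
(expressed as `dim + r ≤ d`, so that the empty set, of dimension `⊥`, is forced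
when `r = d + 1`). -/
theorem stmt_1 (U V : Type*) [TopologicalSpace U] [TopologicalSpace V]
    [IrreducibleSpace U] [TopologicalSpace.NoetherianSpace V]
    (d : ℕ) (hd : topologicalKrullDim V = d)
    (Z : Set (U × V)) (hZ : IsClosed Z)
    (hno : ¬ ∃ v : V, ∀ u : U, (u, v) ∈ Z) :
    ∀ r : ℕ, r ≤ d + 1 →
      ∃ u : Fin r → U,
        topologicalKrullDim (↥(⋂ i, {v : V | (u i, v) ∈ Z})) + (r : WithBot ℕ∞)
          ≤ (d : WithBot ℕ∞) := by
  classical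
  intro r hr
  induction r with
  | zero =>
    refine ⟨Fin.elim0, ?_⟩
    have h0 : (⋂ i : Fin 0, {v : V | (Fin.elim0 i, v) ∈ Z}) = Set.univ :=
      Set.iInter_of_empty _
    rw [h0]
    have hdim : topologicalKrullDim ↥(Set.univ : Set V) = topologicalKrullDim V :=
      IsHomeomorph.topologicalKrullDim_eq _ (Homeomorph.Set.univ V).isHomeomorph
    rw [hdim, hd]
    simp
  | succ r ih =>
    obtain ⟨u, hu⟩ := ih (by omega)
    set W := ⋂ i, {v : V | (u i, v) ∈ Z} with hWdef
    have hWc : IsClosed W :=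
      isClosed_iInter fun i => hZ.preimage (Continuous.prodMk_right (u i))
    obtain ⟨S, hSfin, hScl, hSirr, hSU⟩ :=
      NoetherianSpace.exists_finite_set_isClosed_irreducible (α := V) hWc
    lift S to Finset (Set V) using hSfin
    -- the open sets to intersect in `U`
    have push : ∀ v : V, ∃ x : U, (x, v) ∉ Z := by
      push_neg at hno; exact hno
    set O : Set V → Set U := fun t => {x : U | ∃ v ∈ t, (x, v) ∉ Z} with hO
    have hOopen : ∀ t : Set V, IsOpen (O t) := by
      intro t
      have : O t = ⋃ v ∈ t, {x : U | (x, v) ∈ Z}ᶜ := by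
        ext x; simp [hO]
      rw [this]
      exact isOpen_biUnion fun v _ =>
        (hZ.preimage (Continuous.prodMk_left v)).isOpen_compl
    have hOne : ∀ t ∈ S, ((Set.univ : Set U) ∩ O t).Nonempty := by
      intro t ht
      obtain ⟨v, hv⟩ := (hSirr t ht).nonempty
      obtain ⟨x, hx⟩ := push v
      exact ⟨x, trivial, v, hv, hx⟩
    obtain ⟨u₀, -, hu₀⟩ :=
      isIrreducible_iff_sInter.mp (IrreducibleSpace.isIrreducible_univ U)
        (S.image O)
        (by intro s hs; obtain ⟨t, -, rfl⟩ := Finset.mem_image.mp hs; exact hOopen t)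
        (by intro s hs; obtain ⟨t, ht, rfl⟩ := Finset.mem_image.mp hs; exact hOne t ht)
    have hu₀' : ∀ t ∈ S, u₀ ∈ O t := by
      intro t ht
      exact hu₀ (O t) (by exact_mod_cast Finset.mem_image_of_mem O ht)
    set F : Set V := {v : V | (u₀, v) ∈ Z} with hFdef
    have hFc : IsClosed F := hZ.preimage (Continuous.prodMk_right u₀)
    refine ⟨(Fin.cons u₀ u : Fin (r + 1) → U), ?_⟩
    have hset : (⋂ i : Fin (r + 1), {v : V | ((Fin.cons u₀ u : Fin (r + 1) → U) i, v) ∈ Z}) = W ∩ F := by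
      ext v
      simp only [Set.mem_iInter, Set.mem_inter_iff, Set.mem_setOf_eq, hWdef, hFdef]
      constructor
      · intro h
        refine ⟨fun i => ?_, ?_⟩
        · have := h i.succ; rwa [Fin.cons_succ] at this
        · have := h 0; rwa [Fin.cons_zero] at this
      · rintro ⟨h1, h2⟩ i
        refine Fin.cases ?_ ?_ i
        · rwa [Fin.cons_zero]
        · intro j; rw [Fin.cons_succ]; exact h1 j
    rw [hset]
    -- the key hypothesis for `aux_step`
    have H : ∀ C : Set V, IsIrreducible C → IsClosed C → C ⊆ W → C ⊆ F →
        ∃ D : Set V, IsIrreducible D ∧ IsClosed D ∧ D ⊆ W ∧ C ⊂ D := by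
      intro C hC hCcl hCW hCF
      obtain ⟨t, htS, hCt⟩ :=
        isIrreducible_iff_sUnion_isClosed.mp hC S hScl (by rw [← hSU]; exact hCW)
      refine ⟨t, hSirr t htS, hScl t htS, ?_, ?_⟩
      · rw [hSU]; exact Set.subset_sUnion_of_mem (by exact_mod_cast htS)
      · rw [Set.ssubset_iff_subset_ne]
        refine ⟨hCt, ?_⟩
        rintro rfl
        obtain ⟨v, hvC, hv⟩ := hu₀' C htS
        exact hv (hCF hvC)
    have hstep : topologicalKrullDim ↥(W ∩ F) + 1 ≤ topologicalKrullDim ↥W :=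
      aux_add_one_le (aux_key (aux_step hWc hFc H))
    have harith : topologicalKrullDim ↥(W ∩ F) + ((r + 1 : ℕ) : WithBot ℕ∞)
        = (topologicalKrullDim ↥(W ∩ F) + 1) + (r : WithBot ℕ∞) := by
      push_cast
      rw [add_comm (r : WithBot ℕ∞) 1, ← add_assoc]
    rw [harith]
    calc (topologicalKrullDim ↥(W ∩ F) + 1) + (r : WithBot ℕ∞)
        ≤ topologicalKrullDim ↥W + (r : WithBot ℕ∞) := add_le_add_left hstep _
      _ ≤ (d : WithBot ℕ∞) := hu
end

section
/- Let U be an irreducible topological space, let V be a Noetherian topological space, and let Z be a closed subset of U × V (product topology); for u ∈ U write Z_u := {v ∈ V : (u, v) ∈ Z}. Let Y ⊆ V be a nonempty closed subset of finite Krull dimension such that for every irreducible component W of Y there exists some u ∈ U with ¬(W ⊆ Z_u). Then there exists a dense open subset U' ⊆ U such that for every u ∈ U' the Krull dimension of Y ∩ Z_u is strictly smaller than the Krull dimension of Y. -/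
open Set Order TopologicalSpace

/-- If `s ⊆ Y` is irreducible (as a subset of the ambient space), then its preimage in the
subspace `Y` is irreducible. -/
lemma aux_preimage_irred {V : Type*} [TopologicalSpace V] {Y s : Set V}
    (hsY : s ⊆ Y) (hs : IsIrreducible s) :
    IsIrreducible (Subtype.val ⁻¹' s : Set Y) := by
  haveI := Subtype.irreducibleSpace hs
  have h1 : IsIrreducible (Set.univ : Set ↥s) := IrreducibleSpace.isIrreducible_univ _
  have h2 := h1.image (Set.inclusion hsY) (continuous_inclusion hsY).continuousOn
  have heq : Set.inclusion hsY '' Set.univ = (Subtype.val ⁻¹' s : Set Y) := by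
    rw [Set.image_univ, Set.range_inclusion]
    rfl
  rwa [heq] at h2

/-- Every irreducible subset `T ⊆ Y` is contained in (the image of) some irreducible
component of the subspace `Y`. -/
lemma aux_cover {V : Type*} [TopologicalSpace V] {Y : Set V} (T : Set V)
    (hT : IsIrreducible T) (hTY : T ⊆ Y) :
    ∃ W₁ ∈ irreducibleComponents (↥Y), T ⊆ Subtype.val '' W₁ := by
  have hT0 : IsIrreducible (Subtype.val ⁻¹' T : Set Y) := aux_preimage_irred hTY hT
  obtain ⟨t, ht, hsub, hmax⟩ := exists_preirreducible (Subtype.val ⁻¹' T : Set Y)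
    hT0.isPreirreducible
  have htirr : IsIrreducible t := ⟨hT0.nonempty.mono hsub, ht⟩
  refine ⟨t, ⟨htirr, fun u hu htu => (hmax u hu.isPreirreducible htu).le⟩, ?_⟩
  intro v hv
  exact ⟨⟨v, hTY hv⟩, hsub hv, rfl⟩

/-- The image in `V` of an irreducible component of the subspace `Y` is a maximal
irreducible subset of `Y`. -/
lemma aux_max {V : Type*} [TopologicalSpace V] {Y : Set V} {W₁ : Set (↥Y)}
    (hW₁ : W₁ ∈ irreducibleComponents (↥Y)) :
    Maximal (fun s => s ⊆ Y ∧ IsIrreducible s) (Subtype.val '' W₁) := by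
  constructor
  · refine ⟨?_, hW₁.1.image _ continuous_subtype_val.continuousOn⟩
    rintro v ⟨w, _, rfl⟩
    exact w.2
  · rintro s ⟨hsY, hs⟩ hWs
    have hs0 : IsIrreducible (Subtype.val ⁻¹' s : Set Y) := aux_preimage_irred hsY hs
    have hW₁s : W₁ ⊆ (Subtype.val ⁻¹' s : Set Y) := by
      intro w hw
      exact hWs ⟨w, hw, rfl⟩
    have := hW₁.2 hs0 hW₁s
    intro v hv
    have hvY : v ∈ Y := hsY hv
    exact ⟨⟨v, hvY⟩, this hv, rfl⟩

/-- A finite intersection of dense open sets is dense open. -/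
lemma aux_dense_open {α ι : Type*} [TopologicalSpace α] {S : Set ι} (hS : S.Finite)
    (f : ι → Set α) (h : ∀ i ∈ S, IsOpen (f i) ∧ Dense (f i)) :
    IsOpen (⋂ i ∈ S, f i) ∧ Dense (⋂ i ∈ S, f i) := by
  refine Set.Finite.induction_on
    (motive := fun s _ => (∀ i ∈ s, IsOpen (f i) ∧ Dense (f i)) →
      IsOpen (⋂ i ∈ s, f i) ∧ Dense (⋂ i ∈ s, f i)) S hS ?_ ?_ h
  · intro _
    simp only [Set.mem_empty_iff_false, Set.iInter_of_empty, Set.iInter_univ]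
    exact ⟨isOpen_univ, dense_univ⟩
  · intro a s _ _ ih h'
    rw [Set.biInter_insert]
    have ha := h' a (Set.mem_insert _ _)
    have hs := ih fun i hi => h' i (Set.mem_insert_of_mem _ hi)
    exact ⟨ha.1.inter hs.1, ha.2.inter_of_isOpen_left hs.2 ha.1⟩

/-- `U` irreducible, `V` Noetherian, `Z ⊆ U × V` closed. Let `Y ⊆ V`
be a nonempty closed subset of finite Krull dimension such that every irreducible
component `W` of `Y` (i.e. every maximal irreducible subset of `Y`) satisfies
`¬ (W ⊆ Z_u)` for some `u ∈ U`. Then there is a dense open `U' ⊆ U` such that for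
every `u ∈ U'`, `dim (Y ∩ Z_u) < dim Y`. -/
theorem stmt_3 (U V : Type*) [TopologicalSpace U] [TopologicalSpace V]
    [IrreducibleSpace U] [TopologicalSpace.NoetherianSpace V]
    (Z : Set (U × V)) (hZ : IsClosed Z)
    (Y : Set V) (hYne : Y.Nonempty) (hYcl : IsClosed Y)
    (hYfin : ∃ n : ℕ, topologicalKrullDim (↥Y) = n)
    (hcomp : ∀ W : Set V, Maximal (fun s => s ⊆ Y ∧ IsIrreducible s) W →
      ∃ u : U, ¬ (W ⊆ {v : V | (u, v) ∈ Z})) :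
    ∃ U' : Set U, IsOpen U' ∧ Dense U' ∧
      ∀ u ∈ U',
        topologicalKrullDim (↥(Y ∩ {v : V | (u, v) ∈ Z}))
          < topologicalKrullDim (↥Y) := by
  classical
  -- the irreducible components of the subspace `Y`
  have hfin : (irreducibleComponents (↥Y)).Finite :=
    NoetherianSpace.finite_irreducibleComponents
  -- the "good" open set attached to a subset `W ⊆ V`
  set F : Set V → Set U := fun W => {u | ¬ W ⊆ {v : V | (u, v) ∈ Z}} with hF
  have hFopen : ∀ W : Set V, IsOpen (F W) := by
    intro W
    have hcl : IsClosed {u : U | W ⊆ {v : V | (u, v) ∈ Z}} := by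
      have : {u : U | W ⊆ {v : V | (u, v) ∈ Z}} = ⋂ v ∈ W, (fun u => (u, v)) ⁻¹' Z := by
        ext u
        simp [Set.subset_def]
      rw [this]
      exact isClosed_biInter fun v _ => hZ.preimage (continuous_id.prodMk continuous_const)
    have : F W = {u : U | W ⊆ {v : V | (u, v) ∈ Z}}ᶜ := rfl
    rw [this]
    exact hcl.isOpen_compl
  -- each such set coming from an irreducible component is dense
  have hFdense : ∀ W₁ ∈ irreducibleComponents (↥Y), Dense (F (Subtype.val '' W₁)) := by
    intro W₁ hW₁
    obtain ⟨u, hu⟩ := hcomp _ (aux_max hW₁)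
    exact (hFopen _).dense ⟨u, hu⟩
  obtain ⟨hUopen, hUdense⟩ := aux_dense_open hfin (fun W₁ => F (Subtype.val '' W₁))
    (fun W₁ hW₁ => ⟨hFopen _, hFdense W₁ hW₁⟩)
  refine ⟨⋂ W₁ ∈ irreducibleComponents (↥Y), F (Subtype.val '' W₁), hUopen, hUdense, ?_⟩
  intro u hu
  obtain ⟨n, hn⟩ := hYfin
  rw [hn]
  set C : Set V := Y ∩ {v : V | (u, v) ∈ Z} with hC
  have hCcl : IsClosed C :=
    hYcl.inter (hZ.preimage (continuous_const.prodMk continuous_id))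
  by_contra hlt
  rw [not_lt] at hlt
  -- `hlt : ↑n ≤ topologicalKrullDim ↥C`
  haveI hne : Nonempty (IrreducibleCloseds (↥C)) := by
    by_contra h
    rw [not_nonempty_iff] at h
    rw [topologicalKrullDim, Order.krullDim_eq_bot] at hlt
    simp at hlt
  -- extract a chain of length at least `n` in `C`
  have hex : ∃ p : LTSeries (IrreducibleCloseds (↥C)), n ≤ p.length := by
    by_contra hp
    push_neg at hp
    have hn1 : 0 < n :=
      lt_of_le_of_lt (Nat.zero_le _) (hp (RelSeries.singleton _ (Classical.arbitrary _)))
    have hle : topologicalKrullDim (↥C) ≤ ((n - 1 : ℕ) : WithBot ℕ∞) := by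
      rw [topologicalKrullDim, Order.krullDim_eq_iSup_length]
      have : (⨆ p : LTSeries (IrreducibleCloseds (↥C)), (p.length : ℕ∞)) ≤ ((n - 1 : ℕ) : ℕ∞) :=
        iSup_le fun p => by exact_mod_cast Nat.le_sub_one_of_lt (hp p)
      rw [show ((n - 1 : ℕ) : WithBot ℕ∞) = (((n - 1 : ℕ) : ℕ∞) : WithBot ℕ∞) by norm_cast]
      exact WithBot.coe_le_coe.mpr this
    have : (n : WithBot ℕ∞) ≤ ((n - 1 : ℕ) : WithBot ℕ∞) := le_trans hlt hle
    have : n ≤ n - 1 := by exact_mod_cast this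
    omega
  obtain ⟨p, hp⟩ := hex
  have hCY : C ⊆ Y := Set.inter_subset_left
  -- the inclusion `C ↪ Y` is a closed embedding
  have hincl : Topology.IsClosedEmbedding (Set.inclusion hCY) := by
    refine ⟨Topology.IsEmbedding.inclusion hCY, ?_⟩
    rw [Set.range_inclusion]
    exact hCcl.preimage continuous_subtype_val
  set φ : IrreducibleCloseds (↥C) → IrreducibleCloseds (↥Y) :=
    IrreducibleCloseds.map (Set.inclusion hCY) hincl.continuous with hφ
  have hφmono : StrictMono φ := IrreducibleCloseds.map_strictMono_of_isInducing hincl.isInducing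
  set q : LTSeries (IrreducibleCloseds (↥Y)) := p.map φ hφmono with hq
  -- the image in `V` of the top of the chain
  set T : Set V := Subtype.val '' (q.last : Set (↥Y)) with hT
  have hql : q.last = φ p.last := LTSeries.last_map p φ hφmono
  have hTC : T ⊆ C := by
    rintro v ⟨y, hy, rfl⟩
    rw [hql, hφ, IrreducibleCloseds.coe_map, (hincl.isClosedMap _ p.last.isClosed).closure_eq] at hy
    obtain ⟨x, _, rfl⟩ := hy
    exact x.2
  have hTirr : IsIrreducible T :=
    q.last.isIrreducible'.image _ continuous_subtype_val.continuousOn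
  have hTY : T ⊆ Y := by
    rintro v ⟨y, _, rfl⟩
    exact y.2
  obtain ⟨W₁, hW₁, hTW⟩ := aux_cover T hTirr hTY
  have hu' : ¬ (Subtype.val '' W₁ ⊆ {v : V | (u, v) ∈ Z}) :=
    Set.mem_iInter₂.mp hu W₁ hW₁
  obtain ⟨v, hvW, hvZ⟩ := Set.not_subset.mp hu'
  obtain ⟨w, hwW₁, rfl⟩ := hvW
  set W₀ : IrreducibleCloseds (↥Y) :=
    ⟨W₁, hW₁.1, isClosed_of_mem_irreducibleComponents _ hW₁⟩ with hW₀
  have hlast : q.last < W₀ := by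
    rw [SetLike.lt_iff_le_and_exists]
    constructor
    · intro y hy
      obtain ⟨w', hw', hww⟩ := hTW (Set.mem_image_of_mem _ hy)
      have : w' = y := Subtype.ext hww
      rw [← this]
      exact hw'
    · refine ⟨w, hwW₁, fun hw => ?_⟩
      have : (w : V) ∈ T := Set.mem_image_of_mem _ hw
      exact hvZ (hTC this).2
  set r : LTSeries (IrreducibleCloseds (↥Y)) := q.snoc W₀ hlast with hr
  have hrlen : (r.length : WithBot ℕ∞) ≤ (n : WithBot ℕ∞) := by
    have h1 : (r.length : WithBot ℕ∞) ≤ Order.krullDim (IrreducibleCloseds (↥Y)) :=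
      Order.LTSeries.length_le_krullDim r
    exact le_trans h1 (le_of_eq hn)
  have hrlen' : r.length ≤ n := by exact_mod_cast hrlen
  have : r.length = p.length + 1 := rfl
  omega
end

section
/- Let Y be a nonempty closed subset of a Noetherian topological space, and assume Y has finite Krull dimension. Let Y' ⊆ Y be a closed subset such that no irreducible component of Y is contained in Y'. Then the Krull dimension of Y' is strictly smaller than the Krull dimension of Y (with the empty set having dimension ⊥, which is strictly less than any natural number). -/
open Topology Set Order

/-- Preimage of an irreducible subset under the subtype inclusion is irreducible. -/
lemma stmt4_aux_irred {V : Type*} [TopologicalSpace V] {Y s : Set V}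
    (hs : IsIrreducible s) (hsY : s ⊆ Y) :
    IsIrreducible ((Subtype.val : ↥Y → V) ⁻¹' s) := by
  have : IrreducibleSpace ↥s := Subtype.irreducibleSpace hs
  have h2 := (IrreducibleSpace.isIrreducible_univ ↥s).image (Set.inclusion hsY)
    (continuous_inclusion hsY).continuousOn
  rwa [Set.image_univ, Set.range_inclusion] at h2

/-- Let `Y` be a nonempty closed subset of finite Krull dimension in a
Noetherian topological space `V`, and let `Y' ⊆ Y` be a closed subset containing no
irreducible component of `Y` (i.e. no maximal irreducible subset of `Y`). Then
`dim Y' < dim Y`. -/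
theorem stmt_4 (V : Type*) [TopologicalSpace V] [TopologicalSpace.NoetherianSpace V]
    (Y : Set V) (hYne : Y.Nonempty) (hYcl : IsClosed Y)
    (hYfin : ∃ n : ℕ, topologicalKrullDim (↥Y) = n)
    (Y' : Set V) (hY'cl : IsClosed Y') (hY'sub : Y' ⊆ Y)
    (hcomp : ∀ W : Set V, Maximal (fun s => s ⊆ Y ∧ IsIrreducible s) W → ¬ (W ⊆ Y')) :
    topologicalKrullDim (↥Y') < topologicalKrullDim (↥Y) := by
  obtain ⟨n, hn⟩ := hYfin
  -- the inclusion Y' → Y is a closed embedding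
  have hcl : IsClosedEmbedding (Set.inclusion hY'sub) := by
    refine ⟨Topology.IsEmbedding.inclusion hY'sub, ?_⟩
    rw [Set.range_inclusion]
    exact hY'cl.preimage continuous_subtype_val
  set f : TopologicalSpace.IrreducibleCloseds ↥Y' → TopologicalSpace.IrreducibleCloseds ↥Y :=
    TopologicalSpace.IrreducibleCloseds.map (Set.inclusion hY'sub) hcl.continuous with hf
  have hfmono : StrictMono f := TopologicalSpace.IrreducibleCloseds.map_strictMono_of_isInducing hcl.isInducing
  -- key: every chain in Y' extends by one in Y
  have key : ∀ p : LTSeries (TopologicalSpace.IrreducibleCloseds ↥Y'), p.length + 1 ≤ n := by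
    intro p
    -- find a maximal preirreducible set containing (f p.last)
    obtain ⟨t, htpre, htsub, htmax⟩ :=
      exists_preirreducible ((f p.last) : Set ↥Y) (f p.last).isIrreducible'.isPreirreducible
    have htcl : IsClosed t := by
      have := htmax _ htpre.closure subset_closure
      rw [← this]; exact isClosed_closure
    have htirr : IsIrreducible t :=
      ⟨(f p.last).isIrreducible'.nonempty.mono htsub, htpre⟩
    -- W := image of t in V is a maximal irreducible subset of Y
    set W : Set V := Subtype.val '' t with hW
    have hWY : W ⊆ Y := by rintro _ ⟨x, _, rfl⟩; exact x.2
    have hWmax : Maximal (fun s => s ⊆ Y ∧ IsIrreducible s) W := by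
      refine ⟨⟨hWY, htirr.image _ continuous_subtype_val.continuousOn⟩, ?_⟩
      rintro s ⟨hsY, hsirr⟩ hWs
      have hpre : IsPreirreducible ((Subtype.val : ↥Y → V) ⁻¹' s) :=
        (stmt4_aux_irred hsirr hsY).isPreirreducible
      have h1 : t ⊆ Subtype.val ⁻¹' s := fun x hx => hWs ⟨x, hx, rfl⟩
      have h2 := htmax _ hpre h1
      intro y hy
      have hy' : (⟨y, hsY hy⟩ : ↥Y) ∈ (Subtype.val : ↥Y → V) ⁻¹' s := hy
      rw [h2] at hy'
      exact ⟨_, hy', rfl⟩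
    obtain ⟨y, hyW, hyY'⟩ := Set.not_subset.mp (hcomp W hWmax)
    -- f p.last is strictly below t
    have hsubY' : ∀ x : ↥Y, x ∈ ((f p.last) : Set ↥Y) → (x : V) ∈ Y' := by
      intro x hx
      have hx' : x ∈ Set.inclusion hY'sub '' ((p.last : Set ↥Y')) := by
        rw [← (hcl.isClosedMap _ (p.last).isClosed).closure_eq]; exact hx
      obtain ⟨z, -, rfl⟩ := hx'
      exact z.2
    have hne : ((f p.last) : Set ↥Y) ≠ t := by
      intro h
      obtain ⟨x, hxt, rfl⟩ := hyW
      exact hyY' (hsubY' _ (h ▸ hxt))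
    have hlt : f p.last < (⟨t, htirr, htcl⟩ : TopologicalSpace.IrreducibleCloseds ↥Y) :=
      lt_of_le_of_ne htsub (fun h => hne (congrArg _ h))
    -- extended chain
    set q := RelSeries.snoc (p.map f hfmono) _ hlt with hq
    have hqlen : q.length = p.length + 1 := rfl
    have := LTSeries.length_le_krullDim q
    rw [show Order.krullDim (TopologicalSpace.IrreducibleCloseds ↥Y)
        = topologicalKrullDim ↥Y from rfl, hn, hqlen] at this
    exact_mod_cast this
  rw [show topologicalKrullDim ↥Y' =
      Order.krullDim (TopologicalSpace.IrreducibleCloseds ↥Y') from rfl, hn]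
  rcases Set.eq_empty_or_nonempty Y' with hY'e | hY'ne
  · haveI : IsEmpty ↥Y' := by rw [hY'e]; infer_instance
    haveI : IsEmpty (TopologicalSpace.IrreducibleCloseds ↥Y') :=
      ⟨fun c => c.isIrreducible'.nonempty.elim (fun x _ => (IsEmpty.false x))⟩
    rw [Order.krullDim_eq_bot]
    exact bot_lt_iff_ne_bot.mpr (by simp)
  · obtain ⟨y, hy⟩ := hY'ne
    haveI : Nonempty (TopologicalSpace.IrreducibleCloseds ↥Y') :=
      ⟨⟨closure {(⟨y, hy⟩ : ↥Y')}, isIrreducible_singleton.closure, isClosed_closure⟩⟩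
    have hn1 : 1 ≤ n := by
      simpa using key (RelSeries.singleton _ (Classical.arbitrary _))
    rw [Order.krullDim_eq_iSup_length]
    have hle : (⨆ p : LTSeries (TopologicalSpace.IrreducibleCloseds ↥Y'),
        (p.length : ℕ∞)) ≤ ((n - 1 : ℕ) : ℕ∞) := by
      refine iSup_le fun p => ?_
      have hk := key p
      have : p.length ≤ n - 1 := by omega
      exact_mod_cast this
    refine lt_of_le_of_lt (WithBot.coe_le_coe.mpr hle) ?_
    exact_mod_cast Nat.sub_lt hn1 one_pos
end
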